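/- If a topological space X has a π-tree, then each of the product spaces X × N, X × R_S, and X × R_S^ω also has a π-tree. -/

import Mathlib

open Set

universe u v

/-- A family `γ` π-refines `δ`: every nonempty member of `δ` contains a
nonempty member of `γ`. -/
def PiRefines {α : Type*} (γ δ : Set (Set α)) : Prop :=
  ∀ D ∈ δ, D.Nonempty → ∃ G ∈ γ, G.Nonempty ∧ G ⊆ D

/-- The finite intersection property. -/
def HasFIP {α : Type*} (γ : Set (Set α)) : Prop :=
  ∀ δ : Set (Set α), δ ⊆ γ → δ.Finite → δ.Nonempty → (⋂₀ δ).Nonempty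

/-- `cofin A` is the family of complements in `A` of finite subsets of `A`. -/
def cofin (A : Set ℕ) : Set (Set ℕ) :=
  {B | ∃ C : Set ℕ, C.Finite ∧ C ⊆ A ∧ B = A \ C}

/-- A foliage tree on `X`: a set-theoretic tree (strict partial order with
well-ordered sets of strict predecessors) with a leaf (a subset of `X`)
attached to each node. -/
structure FoliageTree (X : Type u) where
  Node : Type
  lt : Node → Node → Prop
  lt_irrefl : ∀ a, ¬ lt a a
  lt_trans : ∀ {a b c}, lt a b → lt b c → lt a c
  wellOrdered : ∀ a : Node, IsWellOrder {b : Node // lt b a} fun x y => lt x.1 y.1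
  leaf : Node → Set X

/-- Strict proper-extension order on finite sequences of naturals. -/
def seqLT (a b : List ℕ) : Prop := a <+: b ∧ a ≠ b

namespace FoliageTree

variable {X : Type u}

/-- The sons (immediate successors) of a node. -/
def Sons (F : FoliageTree X) (x : F.Node) : Set F.Node :=
  {s | F.lt x s ∧ ¬ ∃ t, F.lt x t ∧ F.lt t s}

/-- A node is maximal if it has no strict successor. -/
def IsMaxNode (F : FoliageTree X) (x : F.Node) : Prop := ¬ ∃ s, F.lt x s

/-- A chain of nodes. -/
def IsChainN (F : FoliageTree X) (C : Set F.Node) : Prop :=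
  ∀ x ∈ C, ∀ y ∈ C, F.lt x y ∨ x = y ∨ F.lt y x

/-- A branch is a maximal chain. -/
def IsBranch (F : FoliageTree X) (B : Set F.Node) : Prop :=
  F.IsChainN B ∧ ∀ C, F.IsChainN C → B ⊆ C → B = C

/-- The height of a node: the order type of its set of strict predecessors. -/
noncomputable def height (F : FoliageTree X) (v : F.Node) : Ordinal :=
  @Ordinal.type {b : F.Node // F.lt b v} (fun x y => F.lt x.1 y.1) (F.wellOrdered v)

/-- `shoot F v`: unions of leaves over cofinite sets of sons of `v`. -/
def shoot (F : FoliageTree X) (v : F.Node) : Set (Set X) :=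
  {S | ∃ C : Set F.Node, C ⊆ F.Sons v ∧ (F.Sons v \ C).Finite ∧ S = ⋃ s ∈ C, F.leaf s}

/-- `scope F p`: the nodes whose leaf contains `p`. -/
def scope (F : FoliageTree X) (p : X) : Set F.Node := {x | p ∈ F.leaf x}

/-- The union of all leaves. -/
def flesh (F : FoliageTree X) : Set X := ⋃ x, F.leaf x

/-- `F` is a foliage `ω,ω`-tree: its skeleton is order-isomorphic to
`(ω^{<ω}, ⊂)`. -/
def IsOmegaOmegaTree (F : FoliageTree X) : Prop := Nonempty (F.lt ≃r seqLT)

/-- `F` is locally strict: the leaf of every non-maximal node is the disjoint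
union of the leaves of its sons. -/
def LocallyStrict (F : FoliageTree X) : Prop :=
  ∀ x, ¬ F.IsMaxNode x →
    F.leaf x = (⋃ s ∈ F.Sons x, F.leaf s) ∧
      ∀ s ∈ F.Sons x, ∀ t ∈ F.Sons x, s ≠ t → Disjoint (F.leaf s) (F.leaf t)

/-- `F` has strict branches: it has nodes, and along every branch the
intersection of the leaves is a singleton. -/
def StrictBranches (F : FoliageTree X) : Prop :=
  Nonempty F.Node ∧ ∀ B, F.IsBranch B → ∃ p, (⋂ x ∈ B, F.leaf x) = {p}

/-- `r` is the root: the least node. -/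
def IsRoot (F : FoliageTree X) (r : F.Node) : Prop := ∀ x, r = x ∨ F.lt r x

/-- All leaves are open. -/
def OpenIn [TopologicalSpace X] (F : FoliageTree X) : Prop := ∀ x, IsOpen (F.leaf x)

/-- `F` is a Baire foliage tree on `X`. -/
def IsBaireFoliageTree [TopologicalSpace X] (F : FoliageTree X) : Prop :=
  F.OpenIn ∧ F.LocallyStrict ∧ F.IsOmegaOmegaTree ∧ F.StrictBranches ∧
    ∃ r, F.IsRoot r ∧ F.leaf r = Set.univ

/-- `F` grows into `X`. -/
def GrowsInto [TopologicalSpace X] (F : FoliageTree X) : Prop :=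
  ∀ p : X, ∀ U ∈ nhds p, ∃ z ∈ F.scope p, PiRefines (F.shoot z) {U}

/-- `F` is a π-tree on `X`. -/
def IsPiTree [TopologicalSpace X] (F : FoliageTree X) : Prop :=
  F.IsBaireFoliageTree ∧ F.GrowsInto

/-- `rise F p U`: the set of (finite) heights of nodes `v` whose leaf contains
`p` and whose shoot π-refines `{U}`. -/
noncomputable def rise (F : FoliageTree X) (p : X) (U : Set X) : Set ℕ :=
  {n | ∃ v ∈ F.scope p, PiRefines (F.shoot v) {U} ∧ F.height v = (n : Ordinal)}

/-- `Rise F`: all sets `rise F p U` for `p ∈ X` and `U` a neighbourhood of `p`. -/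
def Rise [TopologicalSpace X] (F : FoliageTree X) : Set (Set ℕ) :=
  {R | ∃ p U, U ∈ nhds p ∧ R = F.rise p U}

end FoliageTree

/-- The Sorgenfrey line: the reals with the topology generated by the
half-open intervals `[a, b)`. -/
def SorgLine : Type := ℝ

instance : TopologicalSpace SorgLine :=
  TopologicalSpace.generateFrom {s : Set ℝ | ∃ a b : ℝ, s = Set.Ico a b}

/-!
A π-tree amounts to a scheme of open cells indexed by finite sequences: each cell is the disjoint
union of the cells one level below, branches shrink to points, and every neighbourhood of a point
contains all but finitely many sons of some cell around the point.

On `X × Y`, refine a cell `A × B` by all tuples `[i, k, k']` at once, `A` by `i` and `B` by `k`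
and then `k'`. No indexing of the tuples by `ℕ` makes cofinitely many of them have only large
entries, so the refinement is done in two steps: first the minimum `n` of the tuple, then the
tuple among the infinitely many with minimum `n`. Cofinitely many sons of `A × B` then lie in
`V × W` as soon as cofinitely many sons of `A` lie in `V` and of `B` in `W`. For `A` around `p`
the π-tree of `X` provides this at arbitrarily deep cells; for `B` around `q` we need a scheme on
`Y` growing uniformly: all deep enough cells around `q` have cofinitely many sons in a given
neighbourhood of `q`. The cylinders of the Baire space and the dyadic splitting of the Sorgenfrey
line towards right endpoints grow uniformly, and the same grouping by minima turns a uniformly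
growing scheme on `Y` into one on `Y ^ ℕ` growing uniformly at even depths, which is all the
product uses.
-/

open Filter Topology

section Sequences

variable {α : Type*}

def initSeg (x : ℕ → α) (n : ℕ) : List α := List.ofFn fun i : Fin n => x i

@[simp] lemma length_initSeg (x : ℕ → α) (n : ℕ) : (initSeg x n).length = n := by
  simp [initSeg]

@[simp] lemma getElem_initSeg (x : ℕ → α) (n i : ℕ) (h : i < (initSeg x n).length) :
    (initSeg x n)[i] = x i := by
  simp [initSeg]

@[simp] lemma initSeg_zero (x : ℕ → α) : initSeg x 0 = [] := rfl

lemma initSeg_succ (x : ℕ → α) (n : ℕ) : initSeg x (n + 1) = initSeg x n ++ [x n] := by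
  rw [initSeg, List.ofFn_succ', List.concat_eq_append]; rfl

lemma initSeg_eq_take (x : ℕ → α) {m n : ℕ} (h : m ≤ n) :
    initSeg x m = (initSeg x n).take m :=
  List.ext_getElem (by simp; omega) fun i _ _ => by simp

lemma initSeg_prefix_initSeg (x : ℕ → α) {m n : ℕ} (h : m ≤ n) :
    initSeg x m <+: initSeg x n := by
  rw [initSeg_eq_take x h]; exact List.take_prefix _ _

lemma initSeg_prefix_or_prefix (x : ℕ → α) (m n : ℕ) :
    initSeg x m <+: initSeg x n ∨ initSeg x n <+: initSeg x m :=
  (le_total m n).imp (initSeg_prefix_initSeg x) (initSeg_prefix_initSeg x)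

lemma initSeg_congr {x y : ℕ → α} {n : ℕ} (h : ∀ i < n, x i = y i) :
    initSeg x n = initSeg y n :=
  List.ext_getElem (by simp) fun i hi _ => by simp at hi; simp [h i hi]

lemma eq_of_forall_initSeg_eq {x y : ℕ → α} (h : ∀ n, initSeg x n = initSeg y n) : x = y := by
  funext i
  simpa using congrArg (·[i]?) (h (i + 1))

lemma initSeg_getD (u : List ℕ) : initSeg (fun i => u.getD i 0) u.length = u :=
  List.ext_getElem (by simp) fun i _ hi => by simp [List.getElem?_eq_getElem hi]

lemma eq_initSeg_of_forall_prefix_or {a : List α} {x : ℕ → α}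
    (h : ∀ n, a <+: initSeg x n ∨ initSeg x n <+: a) : a = initSeg x a.length := by
  rcases h a.length with h | h
  exacts [h.eq_of_length (by simp), (h.eq_of_length (by simp)).symm]

lemma exists_eq_initSeg_of_pairwise_prefix {C : Set (List ℕ)}
    (hC : ∀ a ∈ C, ∀ b ∈ C, a <+: b ∨ b <+: a) :
    ∃ x : ℕ → ℕ, ∀ a ∈ C, a = initSeg x a.length := by
  classical
  let x : ℕ → ℕ := fun i =>
    if h : ∃ b ∈ C, i < b.length then (h.choose)[i]'h.choose_spec.2 else 0
  refine ⟨x, fun a ha => List.ext_getElem (by simp) fun i hi _ => ?_⟩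
  have h : ∃ b ∈ C, i < b.length := ⟨a, ha, hi⟩
  obtain ⟨hb, hib⟩ := h.choose_spec
  simp only [getElem_initSeg, x, dif_pos h]
  rcases hC a ha _ hb with hab | hba
  exacts [hab.getElem hi, (hba.getElem hib).symm]

lemma antitone_foldl_initSeg {σ Z : Type*} {next : σ → α → σ} {leaf : σ → Set Z}
    (h : ∀ s a, leaf (next s a) ⊆ leaf s) (s₀ : σ) (x : ℕ → α) :
    Antitone fun n => leaf ((initSeg x n).foldl next s₀) :=
  antitone_nat_of_succ_le fun n => by
    simpa only [initSeg_succ, List.foldl_append, List.foldl_cons, List.foldl_nil] using h _ _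

end Sequences

section SeqLT

lemma seqLT_iff {a b : List ℕ} : seqLT a b ↔ a <+: b ∧ a.length < b.length :=
  ⟨fun h => ⟨h.1, lt_of_le_of_ne h.1.length_le fun hl => h.2 (h.1.eq_of_length hl)⟩,
    fun h => ⟨h.1, fun hab => h.2.ne (congrArg List.length hab)⟩⟩

lemma seqLT_or_eq_or_seqLT_iff {a b : List ℕ} :
    (seqLT a b ∨ a = b ∨ seqLT b a) ↔ (a <+: b ∨ b <+: a) := by
  constructor
  · rintro (h | rfl | h)
    exacts [Or.inl h.1, Or.inl (List.prefix_refl a), Or.inr h.1]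
  · rintro (h | h) <;> by_cases hab : a = b
    exacts [Or.inr (Or.inl hab), Or.inl ⟨h, hab⟩, Or.inr (Or.inl hab),
      Or.inr (Or.inr ⟨h, Ne.symm hab⟩)]

lemma seqLT_covBy_iff {u w : List ℕ} :
    (seqLT u w ∧ ¬ ∃ t, seqLT u t ∧ seqLT t w) ↔ ∃ k, w = u ++ [k] := by
  simp only [seqLT_iff]
  constructor
  · rintro ⟨⟨huw, hlt⟩, hmid⟩
    have hlen : w.length = u.length + 1 := by
      by_contra hne
      refine hmid ⟨w.take (u.length + 1), ⟨?_, ?_⟩, List.take_prefix _ _, ?_⟩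
      · exact List.prefix_of_prefix_length_le huw (List.take_prefix _ _) (by simp; omega)
      all_goals simp; omega
    obtain ⟨k, hk⟩ : ∃ k, w.drop u.length = [k] :=
      List.length_eq_one_iff.mp (by simp [hlen])
    exact ⟨k, by rw [← hk, List.prefix_iff_eq_append.mp huw]⟩
  · rintro ⟨k, rfl⟩
    refine ⟨⟨List.prefix_append _ _, by simp⟩, ?_⟩
    rintro ⟨t, ⟨-, h₁⟩, -, h₂⟩
    simp at h₂
    omega

lemma isWellOrder_seqLT (a : List ℕ) : IsWellOrder {b // seqLT b a} fun x y => seqLT x.1 y.1 :=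
  RelEmbedding.isWellOrder (s := (· < ·))
    { toFun := fun b => b.1.length
      inj' := fun b c h => Subtype.ext <|
        (List.prefix_of_prefix_length_le b.2.1 c.2.1 h.le).eq_of_length h
      map_rel_iff' := fun {b c} =>
        ⟨fun h => seqLT_iff.2 ⟨List.prefix_of_prefix_length_le b.2.1 c.2.1 h.le, h⟩,
          fun h => (seqLT_iff.1 h).2⟩ }

end SeqLT

namespace FoliageTree

variable {X : Type u} {F : FoliageTree X}

lemma sons_eq_range (e : F.lt ≃r seqLT) (v : F.Node) :
    F.Sons v = range fun k => e.symm (e v ++ [k]) := by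
  ext s
  have h : s ∈ F.Sons v ↔ ∃ k, e s = e v ++ [k] := by
    rw [← seqLT_covBy_iff]
    simp only [Sons, Set.mem_ofPred_eq, e.surjective.exists, e.map_rel_iff]
  simp only [h, mem_range, e.symm_apply_eq, eq_comm]

lemma not_isMaxNode (e : F.lt ≃r seqLT) (v : F.Node) : ¬ F.IsMaxNode v :=
  fun h => h ⟨e.symm (e v ++ [0]), by
    rw [← e.map_rel_iff, e.apply_symm_apply, seqLT_iff]; simp⟩

lemma apply_eq_nil_of_isRoot (e : F.lt ≃r seqLT) {r : F.Node} (hr : F.IsRoot r) : e r = [] := by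
  rcases hr (e.symm []) with h | h
  · simp [h]
  · have := (seqLT_iff.1 (e.map_rel_iff.2 h)).2
    simp at this

lemma isChainN_iff (e : F.lt ≃r seqLT) {C : Set F.Node} :
    F.IsChainN C ↔ ∀ a ∈ C, ∀ b ∈ C, e a <+: e b ∨ e b <+: e a := by
  have key (a b : F.Node) : (F.lt a b ∨ a = b ∨ F.lt b a) ↔ (e a <+: e b ∨ e b <+: e a) := by
    rw [← seqLT_or_eq_or_seqLT_iff, e.map_rel_iff, e.map_rel_iff, e.injective.eq_iff]
  simp only [IsChainN, key]

lemma isBranch_iff (e : F.lt ≃r seqLT) {B : Set F.Node} :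
    F.IsBranch B ↔ ∃ x : ℕ → ℕ, B = e.symm '' range (initSeg x) := by
  have chain_range (x : ℕ → ℕ) : F.IsChainN (e.symm '' range (initSeg x)) := by
    rw [isChainN_iff e]
    rintro _ ⟨_, ⟨m, rfl⟩, rfl⟩ _ ⟨_, ⟨n, rfl⟩, rfl⟩
    simpa using initSeg_prefix_or_prefix x m n
  constructor
  · rintro ⟨hB, hmax⟩
    obtain ⟨x, hx⟩ := exists_eq_initSeg_of_pairwise_prefix (C := e '' B) <| by
      rintro _ ⟨a, ha, rfl⟩ _ ⟨b, hb, rfl⟩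
      exact (isChainN_iff e).1 hB a ha b hb
    exact ⟨x, hmax _ (chain_range x) fun a ha =>
      ⟨e a, ⟨_, (hx _ ⟨a, ha, rfl⟩).symm⟩, e.symm_apply_apply a⟩⟩
  · rintro ⟨x, rfl⟩
    refine ⟨chain_range x, fun C hC hsub => hsub.antisymm fun c hc => ?_⟩
    have hc' : e c = initSeg x (e c).length := eq_initSeg_of_forall_prefix_or fun n => by
      simpa using (isChainN_iff e).1 hC c hc _ (hsub ⟨_, ⟨n, rfl⟩, rfl⟩)
    exact ⟨_, ⟨_, hc'.symm⟩, e.symm_apply_apply c⟩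

lemma eventually_leaf_subset_of_mem_shoot (e : F.lt ≃r seqLT) {v : F.Node} {G : Set X}
    (hG : G ∈ F.shoot v) : ∀ᶠ k in atTop, F.leaf (e.symm (e v ++ [k])) ⊆ G := by
  obtain ⟨C, -, hfin, rfl⟩ := hG
  have hinj : Function.Injective fun k => e.symm (e v ++ [k]) := fun j k h => by
    simpa using e.symm.injective h
  have hC : ∀ᶠ k in cofinite, e.symm (e v ++ [k]) ∈ C :=
    (hfin.preimage hinj.injOn).subset fun k hk =>
      ⟨by rw [sons_eq_range e]; exact mem_range_self k, hk⟩
  rw [← Nat.cofinite_eq_atTop]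
  exact hC.mono fun k hk => subset_biUnion_of_mem (u := F.leaf) hk

lemma iUnion_leaf_symm_append_mem_shoot (e : F.lt ≃r seqLT) (v : F.Node) (N : ℕ) :
    (⋃ k ≥ N, F.leaf (e.symm (e v ++ [k]))) ∈ F.shoot v := by
  refine ⟨(fun k => e.symm (e v ++ [k])) '' Ici N, ?_, ?_, by rw [biUnion_image]; rfl⟩
  · rw [sons_eq_range e]; exact image_subset_range _ _
  · refine ((finite_Iio N).image fun k => e.symm (e v ++ [k])).subset ?_
    rintro _ ⟨hs, hsC⟩
    rw [sons_eq_range e] at hs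
    obtain ⟨k, rfl⟩ := hs
    exact ⟨k, mem_Iio.2 (not_le.1 fun hk => hsC ⟨k, hk, rfl⟩), rfl⟩

lemma foldl_symm_append (e : F.lt ≃r seqLT) (w u : List ℕ) :
    u.foldl (fun v k => e.symm (e v ++ [k])) (e.symm w) = e.symm (w ++ u) := by
  induction u generalizing w with
  | nil => simp
  | cons k u ih => simp [ih]

end FoliageTree

/-- A Baire foliage tree presented as a transition system: the node `u : List ℕ` carries the
leaf of the state reached from `start` by reading the letters of `u`. -/
structure BaireScheme (Z : Type u) [TopologicalSpace Z] where
  State : Type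
  start : State
  next : State → ℕ → State
  leaf : State → Set Z
  isOpen_leaf : ∀ s, IsOpen (leaf s)
  leaf_start : leaf start = univ
  leaf_eq_iUnion : ∀ s, leaf s = ⋃ k, leaf (next s k)
  disjoint_leaf : ∀ s ⦃j k : ℕ⦄, j ≠ k → Disjoint (leaf (next s j)) (leaf (next s k))
  iInter_leaf : ∀ x : ℕ → ℕ, ∃ z, ⋂ n, leaf ((initSeg x n).foldl next start) = {z}

namespace BaireScheme

section Basic

variable {Z : Type u} [TopologicalSpace Z] (S : BaireScheme Z)

def run (u : List ℕ) : S.State := u.foldl S.next S.start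

def cell (u : List ℕ) : Set Z := S.leaf (S.run u)

@[simp] lemma run_append (u v : List ℕ) : S.run (u ++ v) = v.foldl S.next (S.run u) :=
  List.foldl_append

lemma cell_append_singleton (u : List ℕ) (k : ℕ) :
    S.cell (u ++ [k]) = S.leaf (S.next (S.run u) k) := by
  simp [cell]

@[simp] lemma cell_nil : S.cell [] = univ := S.leaf_start

lemma isOpen_cell (u : List ℕ) : IsOpen (S.cell u) := S.isOpen_leaf _

lemma leaf_next_subset (s : S.State) (k : ℕ) : S.leaf (S.next s k) ⊆ S.leaf s :=
  (S.leaf_eq_iUnion s).symm ▸ subset_iUnion (fun k => S.leaf (S.next s k)) k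

lemma cell_eq_iUnion (u : List ℕ) : S.cell u = ⋃ k, S.cell (u ++ [k]) := by
  simp only [cell_append_singleton]; exact S.leaf_eq_iUnion _

lemma disjoint_cell (u : List ℕ) {j k : ℕ} (h : j ≠ k) :
    Disjoint (S.cell (u ++ [j])) (S.cell (u ++ [k])) := by
  simp only [cell_append_singleton]; exact S.disjoint_leaf _ h

lemma cell_append_subset (u v : List ℕ) : S.cell (u ++ v) ⊆ S.cell u := by
  induction v using List.reverseRecOn with
  | nil => simp
  | append_singleton v k ih =>
    rw [← List.append_assoc, cell_append_singleton]
    exact (S.leaf_next_subset _ _).trans ih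

lemma cell_subset_of_prefix {u v : List ℕ} (h : u <+: v) : S.cell v ⊆ S.cell u := by
  obtain ⟨w, rfl⟩ := h; exact S.cell_append_subset u w

lemma antitone_cell_initSeg (x : ℕ → ℕ) : Antitone fun n => S.cell (initSeg x n) :=
  antitone_foldl_initSeg S.leaf_next_subset _ x

lemma iInter_cell (x : ℕ → ℕ) : ∃ z, ⋂ n, S.cell (initSeg x n) = {z} := S.iInter_leaf x

lemma cell_nonempty (u : List ℕ) : (S.cell u).Nonempty := by
  obtain ⟨z, hz⟩ := S.iInter_cell fun i => u.getD i 0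
  refine ⟨z, ?_⟩
  have := mem_iInter.1 (hz.symm ▸ mem_singleton z : z ∈ ⋂ n, _) u.length
  rwa [initSeg_getD] at this

lemma eq_of_mem_cell {p : Z} {u v : List ℕ} (hu : p ∈ S.cell u) (hv : p ∈ S.cell v)
    (h : u.length = v.length) : u = v := by
  induction u using List.reverseRecOn generalizing v with
  | nil => exact (List.length_eq_zero_iff.1 h.symm).symm
  | append_singleton u j ih =>
    obtain ⟨v, k, rfl⟩ := v.eq_nil_or_concat'.resolve_left (by rintro rfl; simp at h)
    simp only [List.length_append, List.length_singleton, Nat.add_right_cancel_iff] at h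
    obtain rfl := ih (S.cell_append_subset _ _ hu) (S.cell_append_subset _ _ hv) h
    obtain rfl : j = k := by
      by_contra hjk; exact (S.disjoint_cell u hjk).ne_of_mem hu hv rfl
    rfl

lemma exists_address (p : Z) : ∃ x : ℕ → ℕ, ∀ n, p ∈ S.cell (initSeg x n) := by
  have levels (n : ℕ) : ∃ u : List ℕ, u.length = n ∧ p ∈ S.cell u := by
    induction n with
    | zero => exact ⟨[], rfl, by simp⟩
    | succ n ih =>
      obtain ⟨u, rfl, hu⟩ := ih
      obtain ⟨k, hk⟩ := mem_iUnion.1 (S.cell_eq_iUnion u ▸ hu)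
      exact ⟨u ++ [k], by simp, hk⟩
  have comparable (a b : List ℕ) (ha : p ∈ S.cell a) (hb : p ∈ S.cell b)
      (h : a.length ≤ b.length) : a <+: b := by
    rw [S.eq_of_mem_cell ha (S.cell_subset_of_prefix (b.take_prefix a.length) hb) (by simp [h])]
    exact List.take_prefix _ _
  obtain ⟨x, hx⟩ := exists_eq_initSeg_of_pairwise_prefix (C := {u | p ∈ S.cell u})
    fun a ha b hb => (le_total a.length b.length).imp (comparable a b ha hb) (comparable b a hb ha)
  refine ⟨x, fun n => ?_⟩
  obtain ⟨u, rfl, hu⟩ := levels n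
  rwa [← hx u hu]

/-- The counterpart of `FoliageTree.GrowsInto`. -/
def Grows : Prop :=
  ∀ p, ∀ U ∈ 𝓝 p, ∃ u, p ∈ S.cell u ∧ ∀ᶠ k in atTop, S.cell (u ++ [k]) ⊆ U

def GrowsUniformlyAt (D : Set ℕ) : Prop :=
  ∀ q, ∀ W ∈ 𝓝 q, ∀ᶠ n in atTop, n ∈ D → ∀ u : List ℕ, u.length = n → q ∈ S.cell u →
    ∀ᶠ k in atTop, S.cell (u ++ [k]) ⊆ W

variable {S}

lemma GrowsUniformlyAt.mono {D D' : Set ℕ} (h : S.GrowsUniformlyAt D) (hD : D' ⊆ D) :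
    S.GrowsUniformlyAt D' :=
  fun q W hW => (h q W hW).mono fun _ hn hD' => hn (hD hD')

lemma Grows.exists_ge_eventually_subset (hS : S.Grows) {p : Z} {x : ℕ → ℕ}
    (hx : ∀ n, p ∈ S.cell (initSeg x n)) {V : Set Z} (hV : V ∈ 𝓝 p) (m : ℕ) :
    ∃ n ≥ m, ∀ᶠ k in atTop, S.cell (initSeg x n ++ [k]) ⊆ V := by
  obtain ⟨u, hpu, hu⟩ := hS p (V ∩ S.cell (initSeg x m))
    (inter_mem hV ((S.isOpen_cell _).mem_nhds (hx m)))
  have hux : u = initSeg x u.length := S.eq_of_mem_cell hpu (hx _) (by simp)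
  rw [hux] at hu
  refine ⟨u.length, ?_, hu.mono fun k hk => hk.trans inter_subset_left⟩
  by_contra! hlt
  -- all late sons of `u` would lie in its son towards `initSeg x m`
  obtain ⟨k, hk, hne⟩ := (hu.and (eventually_ne_atTop (x u.length))).exists
  have hsub : S.cell (initSeg x u.length ++ [k]) ⊆ S.cell (initSeg x u.length ++ [x u.length]) :=
    (hk.trans inter_subset_right).trans <| S.cell_subset_of_prefix <| by
      rw [← initSeg_succ]; exact initSeg_prefix_initSeg x hlt
  obtain ⟨z, hz⟩ := S.cell_nonempty (initSeg x u.length ++ [k])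
  exact (S.disjoint_cell _ hne).ne_of_mem hz (hsub hz) rfl

end Basic

section Trees

variable {Z : Type u} [TopologicalSpace Z]

def toFoliageTree (S : BaireScheme Z) : FoliageTree Z where
  Node := List ℕ
  lt := seqLT
  lt_irrefl _ h := h.2 rfl
  lt_trans h₁ h₂ := seqLT_iff.2
    ⟨(seqLT_iff.1 h₁).1.trans (seqLT_iff.1 h₂).1, (seqLT_iff.1 h₁).2.trans (seqLT_iff.1 h₂).2⟩
  wellOrdered := isWellOrder_seqLT
  leaf := S.cell

theorem isPiTree_toFoliageTree {S : BaireScheme Z} (hS : S.Grows) :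
    S.toFoliageTree.IsPiTree := by
  let e : S.toFoliageTree.lt ≃r seqLT := RelIso.refl seqLT
  refine ⟨⟨S.isOpen_cell, fun u _ => ⟨?_, ?_⟩, ⟨e⟩, ⟨⟨[]⟩, fun B hB => ?_⟩, [], fun v => ?_,
    S.cell_nil⟩, fun p U hU => ?_⟩
  · rw [FoliageTree.sons_eq_range e, biUnion_range]; exact S.cell_eq_iUnion u
  · rw [FoliageTree.sons_eq_range e]
    rintro _ ⟨j, rfl⟩ _ ⟨k, rfl⟩ hjk
    exact S.disjoint_cell u fun h => hjk (h ▸ rfl)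
  · obtain ⟨x, rfl⟩ := (FoliageTree.isBranch_iff e).1 hB
    rw [biInter_image, biInter_range]
    exact S.iInter_cell x
  · by_cases hv : v = []
    exacts [Or.inl hv.symm, Or.inr (seqLT_iff.2 ⟨List.nil_prefix, List.length_pos_iff.2 hv⟩)]
  · obtain ⟨u, hpu, hu⟩ := hS p U hU
    obtain ⟨N, hN⟩ := eventually_atTop.1 hu
    refine ⟨u, hpu, ?_⟩
    rintro _ rfl -
    refine ⟨_, FoliageTree.iUnion_leaf_symm_append_mem_shoot e u N, ?_, iUnion₂_subset hN⟩
    exact (S.cell_nonempty (u ++ [N])).mono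
      (subset_biUnion_of_mem (u := fun k => S.cell (u ++ [k])) (le_refl N))

def ofFoliageTree {F : FoliageTree Z} (e : F.lt ≃r seqLT) (hF : F.IsBaireFoliageTree) :
    BaireScheme Z where
  State := F.Node
  start := e.symm []
  next v k := e.symm (e v ++ [k])
  leaf := F.leaf
  isOpen_leaf := hF.1
  leaf_start := by
    obtain ⟨-, -, -, -, r, hr, hru⟩ := hF
    rwa [← e.symm_apply_apply r, FoliageTree.apply_eq_nil_of_isRoot e hr] at hru
  leaf_eq_iUnion v := by
    rw [(hF.2.1 v (FoliageTree.not_isMaxNode e v)).1, FoliageTree.sons_eq_range e, biUnion_range]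
  disjoint_leaf v j k hjk := by
    refine (hF.2.1 v (FoliageTree.not_isMaxNode e v)).2 _ ?_ _ ?_ fun h => hjk ?_
    · rw [FoliageTree.sons_eq_range e]; exact mem_range_self j
    · rw [FoliageTree.sons_eq_range e]; exact mem_range_self k
    · simpa using e.symm.injective h
  iInter_leaf x := by
    obtain ⟨-, -, -, ⟨-, hbranch⟩, -⟩ := hF
    obtain ⟨z, hz⟩ := hbranch _ ((FoliageTree.isBranch_iff e).2 ⟨x, rfl⟩)
    rw [biInter_image, biInter_range] at hz
    exact ⟨z, by simpa only [FoliageTree.foldl_symm_append, List.nil_append] using hz⟩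

lemma cell_ofFoliageTree {F : FoliageTree Z} (e : F.lt ≃r seqLT) (hF : F.IsBaireFoliageTree)
    (u : List ℕ) : (ofFoliageTree e hF).cell u = F.leaf (e.symm u) := by
  rw [cell, run, ofFoliageTree, FoliageTree.foldl_symm_append, List.nil_append]

lemma grows_ofFoliageTree {F : FoliageTree Z} (e : F.lt ≃r seqLT) (hF : F.IsBaireFoliageTree)
    (hG : F.GrowsInto) : (ofFoliageTree e hF).Grows := by
  intro p U hU
  obtain ⟨v, hpv, hv⟩ := hG p U hU
  obtain ⟨G, hG, -, hGU⟩ := hv U rfl ⟨p, mem_of_mem_nhds hU⟩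
  refine ⟨e v, ?_, (FoliageTree.eventually_leaf_subset_of_mem_shoot e hG).mono fun k hk => ?_⟩
  · rwa [cell_ofFoliageTree, e.symm_apply_apply]
  · rw [cell_ofFoliageTree]; exact hk.trans hGU

lemma exists_grows_of_isPiTree {F : FoliageTree Z} (hF : F.IsPiTree) :
    ∃ S : BaireScheme Z, S.Grows :=
  let ⟨e⟩ := hF.1.2.2.1
  ⟨ofFoliageTree e hF.1, grows_ofFoliageTree e hF.1 hF.2⟩

end Trees

end BaireScheme

section MinFiber

/-- The length `d + 2 ≥ 2` is what makes every fibre of the minimum infinite. -/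
abbrev MinFiber (d n : ℕ) : Type := {l : List ℕ // l.length = d + 2 ∧ l.min? = some n}

lemma le_of_mem_minFiber {d n : ℕ} (l : MinFiber d n) {k : ℕ} (hk : k ∈ l.1) : n ≤ k :=
  (List.min?_eq_some_iff.1 l.2.2).2 k hk

lemma exists_min?_eq_some {l : List ℕ} {d : ℕ} (hl : l.length = d + 2) : ∃ n, l.min? = some n :=
  Option.isSome_iff_exists.1 (List.isSome_min?_of_ne_nil (List.ne_nil_of_length_eq_add_one hl))

instance (d n : ℕ) : Infinite (MinFiber d n) := by
  refine Infinite.of_injective (fun t : ℕ => (⟨n :: (n + t) :: List.replicate d n, by simp,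
    List.min?_eq_some_iff.2 ⟨by simp, by simp [List.mem_replicate]⟩⟩ : MinFiber d n)) ?_
  intro s t h
  simpa using congrArg (fun l : MinFiber d n => l.1.getD 1 0) h

noncomputable def minFiberEquiv (d n : ℕ) : ℕ ≃ MinFiber d n :=
  letI := Denumerable.ofEncodableOfInfinite (MinFiber d n)
  (Denumerable.eqv _).symm

end MinFiber

structure TupleScheme (Z : Type u) [TopologicalSpace Z] where
  State : Type
  start : State
  dim : State → ℕ
  split : State → List ℕ → State
  leaf : State → Set Z
  isOpen_leaf : ∀ τ, IsOpen (leaf τ)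
  leaf_start : leaf start = univ
  leaf_eq_iUnion : ∀ τ, leaf τ = ⋃ (l : List ℕ) (_ : l.length = dim τ + 2), leaf (split τ l)
  disjoint_leaf : ∀ τ l l', l.length = dim τ + 2 → l'.length = dim τ + 2 → l ≠ l' →
    Disjoint (leaf (split τ l)) (leaf (split τ l'))
  iInter_leaf : ∀ ls : ℕ → List ℕ, ∃ z, ⋂ m, leaf ((initSeg ls m).foldl split start) = {z}

inductive GroupedState (σ : Type) : Type
  | whole : σ → GroupedState σ
  | piece : σ → ℕ → GroupedState σ

namespace TupleScheme

variable {Z : Type u} [TopologicalSpace Z] (T : TupleScheme Z)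

noncomputable def tupleOf (τ : T.State) (n c : ℕ) : List ℕ := (minFiberEquiv (T.dim τ) n c).1

lemma length_tupleOf (τ : T.State) (n c : ℕ) : (T.tupleOf τ n c).length = T.dim τ + 2 :=
  (minFiberEquiv (T.dim τ) n c).2.1

noncomputable def groupedNext : GroupedState T.State → ℕ → GroupedState T.State
  | .whole τ, n => .piece τ n
  | .piece τ n, c => .whole (T.split τ (T.tupleOf τ n c))

def groupedLeaf : GroupedState T.State → Set Z
  | .whole τ => T.leaf τ
  | .piece τ n => ⋃ l : MinFiber (T.dim τ) n, T.leaf (T.split τ l.1)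

lemma leaf_split_subset (τ : T.State) {l : List ℕ} (hl : l.length = T.dim τ + 2) :
    T.leaf (T.split τ l) ⊆ T.leaf τ :=
  (T.leaf_eq_iUnion τ).symm ▸ subset_iUnion₂ (s := fun l _ => T.leaf (T.split τ l)) l hl

lemma groupedLeaf_next_subset (s : GroupedState T.State) (k : ℕ) :
    T.groupedLeaf (T.groupedNext s k) ⊆ T.groupedLeaf s := by
  cases s with
  | whole τ => exact iUnion_subset fun l => T.leaf_split_subset τ l.2.1
  | piece τ n =>
    exact subset_iUnion (fun l : MinFiber (T.dim τ) n => T.leaf (T.split τ l.1))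
      (minFiberEquiv _ n k)

lemma leaf_eq_iUnion_groupedLeaf_piece (τ : T.State) :
    T.leaf τ = ⋃ n, T.groupedLeaf (.piece τ n) := by
  rw [T.leaf_eq_iUnion τ]
  refine subset_antisymm (iUnion₂_subset fun l hl => ?_)
    (iUnion_subset fun n => iUnion_subset fun l => subset_iUnion₂_of_subset l.1 l.2.1 le_rfl)
  obtain ⟨n, hn⟩ := exists_min?_eq_some hl
  exact subset_iUnion_of_subset n <|
    subset_iUnion (fun l : MinFiber (T.dim τ) n => T.leaf (T.split τ l.1)) ⟨l, hl, hn⟩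

noncomputable def wholeState (x : ℕ → ℕ) : ℕ → T.State
  | 0 => T.start
  | m + 1 => T.split (wholeState x m) (T.tupleOf (wholeState x m) (x (2 * m)) (x (2 * m + 1)))

noncomputable def wholeTuples (x : ℕ → ℕ) (m : ℕ) : List ℕ :=
  T.tupleOf (T.wholeState x m) (x (2 * m)) (x (2 * m + 1))

lemma foldl_initSeg_wholeTuples (x : ℕ → ℕ) (m : ℕ) :
    (initSeg (T.wholeTuples x) m).foldl T.split T.start = T.wholeState x m := by
  induction m with
  | zero => rfl
  | succ m ih => rw [initSeg_succ, List.foldl_append, ih]; rfl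

lemma foldl_groupedNext_initSeg_two_mul (x : ℕ → ℕ) (m : ℕ) :
    (initSeg x (2 * m)).foldl T.groupedNext (.whole T.start) = .whole (T.wholeState x m) := by
  induction m with
  | zero => rfl
  | succ m ih =>
    rw [show 2 * (m + 1) = 2 * m + 1 + 1 by ring, initSeg_succ, initSeg_succ, List.foldl_append,
      List.foldl_append, ih]
    rfl

noncomputable def grouped : BaireScheme Z where
  State := GroupedState T.State
  start := .whole T.start
  next := T.groupedNext
  leaf := T.groupedLeaf
  isOpen_leaf
    | .whole τ => T.isOpen_leaf τ
    | .piece _ _ => isOpen_iUnion fun _ => T.isOpen_leaf _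
  leaf_start := T.leaf_start
  leaf_eq_iUnion
    | .whole τ => T.leaf_eq_iUnion_groupedLeaf_piece τ
    | .piece τ n => ((minFiberEquiv _ n).surjective.iUnion_comp
        fun l : MinFiber (T.dim τ) n => T.leaf (T.split τ l.1)).symm
  disjoint_leaf
    | .whole τ, j, k, hjk => disjoint_iUnion_left.2 fun l => disjoint_iUnion_right.2 fun l' =>
        T.disjoint_leaf τ _ _ l.2.1 l'.2.1 fun h =>
          hjk (Option.some_injective _ (l.2.2.symm.trans (h ▸ l'.2.2)))
    | .piece τ n, j, k, hjk => T.disjoint_leaf τ _ _ (T.length_tupleOf τ n j)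
        (T.length_tupleOf τ n k) fun h => hjk ((minFiberEquiv _ n).injective (Subtype.ext h))
  iInter_leaf x := by
    obtain ⟨z, hz⟩ := T.iInter_leaf (T.wholeTuples x)
    refine ⟨z, ?_⟩
    rw [← (antitone_foldl_initSeg T.groupedLeaf_next_subset _ x).iInter_comp_tendsto_atTop
      (f := fun m => 2 * m) (tendsto_id.const_mul_atTop' two_pos)]
    simpa only [foldl_groupedNext_initSeg_two_mul, groupedLeaf, foldl_initSeg_wholeTuples]
      using hz

variable {T}

lemma cell_grouped_of_run_eq {u : List ℕ} {τ : T.State} (hu : T.grouped.run u = .whole τ) :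
    T.grouped.cell u = T.leaf τ := by
  rw [BaireScheme.cell, hu]; rfl

/-- The `c`-th son of a whole state only involves tuples with all entries at least `c`. -/
lemma eventually_cell_grouped_append_subset {u : List ℕ} {τ : T.State}
    (hu : T.grouped.run u = .whole τ) {W : Set Z} {N : ℕ}
    (h : ∀ l : List ℕ, l.length = T.dim τ + 2 → (∀ k ∈ l, N ≤ k) → T.leaf (T.split τ l) ⊆ W) :
    ∀ᶠ c in atTop, T.grouped.cell (u ++ [c]) ⊆ W := by
  filter_upwards [eventually_ge_atTop N] with c hc
  rw [BaireScheme.cell_append_singleton, hu]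
  exact iUnion_subset fun l => h l.1 l.2.1 fun _ hk => hc.trans (le_of_mem_minFiber l hk)

lemma exists_run_grouped_eq_whole (ls : ℕ → List ℕ)
    (hls : ∀ m, (ls m).length = T.dim ((initSeg ls m).foldl T.split T.start) + 2) (m : ℕ) :
    ∃ u, T.grouped.run u = .whole ((initSeg ls m).foldl T.split T.start) := by
  induction m with
  | zero => exact ⟨[], rfl⟩
  | succ m ih =>
    obtain ⟨u, hu⟩ := ih
    obtain ⟨n, hn⟩ := exists_min?_eq_some (hls m)
    refine ⟨u ++ [n, (minFiberEquiv _ n).symm ⟨ls m, hls m, hn⟩], ?_⟩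
    rw [BaireScheme.run_append, hu, initSeg_succ, List.foldl_append]
    simp [grouped, groupedNext, tupleOf]

lemma exists_run_grouped_eq_whole_of_length {u : List ℕ} {m : ℕ} (hu : u.length = 2 * m) :
    ∃ ls : ℕ → List ℕ, T.grouped.run u = .whole ((initSeg ls m).foldl T.split T.start) :=
  ⟨T.wholeTuples fun i => u.getD i 0, by
    rw [foldl_initSeg_wholeTuples, ← foldl_groupedNext_initSeg_two_mul, ← hu, initSeg_getD]; rfl⟩

end TupleScheme

namespace BaireScheme

section Prod

variable {X : Type u} {Y : Type v} [TopologicalSpace X] [TopologicalSpace Y]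

def prodSplit (S : BaireScheme X) (T : BaireScheme Y) (τ : S.State × T.State) (l : List ℕ) :
    S.State × T.State :=
  (S.next τ.1 (l.getD 0 0), T.next (T.next τ.2 (l.getD 1 0)) (l.getD 2 0))

lemma foldl_initSeg_prodSplit (S : BaireScheme X) (T : BaireScheme Y) {ls : ℕ → List ℕ}
    {x y : ℕ → ℕ} (hx : ∀ m, (ls m).getD 0 0 = x m)
    (hy : ∀ m, (ls m).getD 1 0 = y (2 * m) ∧ (ls m).getD 2 0 = y (2 * m + 1)) (m : ℕ) :
    (initSeg ls m).foldl (prodSplit S T) (S.start, T.start) =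
      (S.run (initSeg x m), T.run (initSeg y (2 * m))) := by
  induction m with
  | zero => rfl
  | succ m ih =>
    rw [initSeg_succ, List.foldl_append, ih, show 2 * (m + 1) = 2 * m + 1 + 1 by ring,
      initSeg_succ, initSeg_succ, initSeg_succ]
    simp only [run_append, List.foldl_cons, List.foldl_nil, prodSplit, hx, (hy m).1, (hy m).2]

/-- The second factor advances two levels per step, so that only its growth at even depths
matters. -/
def prodTuple (S : BaireScheme X) (T : BaireScheme Y) : TupleScheme (X × Y) where
  State := S.State × T.State
  start := (S.start, T.start)
  dim _ := 1
  split := prodSplit S T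
  leaf τ := S.leaf τ.1 ×ˢ T.leaf τ.2
  isOpen_leaf τ := (S.isOpen_leaf _).prod (T.isOpen_leaf _)
  leaf_start := by simp [S.leaf_start, T.leaf_start]
  leaf_eq_iUnion τ := by
    refine subset_antisymm (fun z hz => ?_) (iUnion₂_subset fun l _ => prod_mono
      (S.leaf_next_subset _ _) ((T.leaf_next_subset _ _).trans (T.leaf_next_subset _ _)))
    obtain ⟨i, hi⟩ := mem_iUnion.1 (S.leaf_eq_iUnion _ ▸ hz.1)
    obtain ⟨k, hk⟩ := mem_iUnion.1 (T.leaf_eq_iUnion _ ▸ hz.2)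
    obtain ⟨k', hk'⟩ := mem_iUnion.1 (T.leaf_eq_iUnion _ ▸ hk)
    exact mem_iUnion₂.2 ⟨[i, k, k'], rfl, hi, hk'⟩
  disjoint_leaf τ l l' hl hl' hne := by
    obtain ⟨i, k, k', rfl⟩ := List.length_eq_three.1 hl
    obtain ⟨j, m, m', rfl⟩ := List.length_eq_three.1 hl'
    simp only [prodSplit, List.getD_cons_zero, List.getD_cons_succ, Set.disjoint_prod]
    by_cases hij : i = j
    · by_cases hkm : k = m
      · subst hij hkm
        exact Or.inr (T.disjoint_leaf _ fun h => hne (h ▸ rfl))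
      · exact Or.inr ((T.disjoint_leaf _ hkm).mono (T.leaf_next_subset _ _)
          (T.leaf_next_subset _ _))
    · exact Or.inl (S.disjoint_leaf _ hij)
  iInter_leaf ls := by
    obtain ⟨x, hx⟩ : ∃ x : ℕ → ℕ, ∀ m, (ls m).getD 0 0 = x m := ⟨_, fun _ => rfl⟩
    obtain ⟨y, hy⟩ : ∃ y : ℕ → ℕ, ∀ m, (ls m).getD 1 0 = y (2 * m) ∧
        (ls m).getD 2 0 = y (2 * m + 1) :=
      ⟨fun n => (ls (n / 2)).getD (n % 2 + 1) 0, fun m => by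
        simp [show (2 * m + 1) / 2 = m by omega, show (2 * m + 1) % 2 = 1 by omega]⟩
    obtain ⟨a, ha⟩ := S.iInter_cell x
    obtain ⟨b, hb⟩ := T.iInter_cell y
    rw [← (T.antitone_cell_initSeg y).iInter_comp_tendsto_atTop
      (f := fun m => 2 * m) (tendsto_id.const_mul_atTop' two_pos)] at hb
    refine ⟨(a, b), ?_⟩
    simp only [foldl_initSeg_prodSplit S T hx hy]
    ext ⟨p, q⟩
    have hpq := And.intro (Set.ext_iff.1 ha p) (Set.ext_iff.1 hb q)
    simp only [cell, mem_iInter, mem_singleton_iff] at hpq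
    simp [mem_iInter, forall_and, hpq]

noncomputable def prod (S : BaireScheme X) (T : BaireScheme Y) : BaireScheme (X × Y) :=
  (prodTuple S T).grouped

theorem grows_prod {S : BaireScheme X} {T : BaireScheme Y} (hS : S.Grows)
    (hT : T.GrowsUniformlyAt {n | Even n}) : (S.prod T).Grows := by
  rintro ⟨p, q⟩ U hU
  obtain ⟨V, hV, W, hW, hVW⟩ := mem_nhds_prod_iff.1 hU
  obtain ⟨x, hx⟩ := S.exists_address p
  obtain ⟨y, hy⟩ := T.exists_address q
  obtain ⟨M, hM⟩ := eventually_atTop.1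
    ((tendsto_id.const_mul_atTop' two_pos).eventually (hT q W hW))
  obtain ⟨n, hn, hV'⟩ := hS.exists_ge_eventually_subset hx hV M
  have hW' := hM n hn (even_two_mul n) _ (length_initSeg y (2 * n)) (hy _)
  obtain ⟨N, hN⟩ := eventually_atTop.1 (hV'.and hW')
  -- the whole state pairing the `n`-th cell of `p` with the `2 n`-th cell of `q`
  let ls : ℕ → List ℕ := fun m => [x m, y (2 * m), y (2 * m + 1)]
  obtain ⟨u, hu⟩ := (prodTuple S T).exists_run_grouped_eq_whole ls (fun _ => rfl) n
  rw [show (initSeg ls n).foldl (prodTuple S T).split (prodTuple S T).start =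
      (S.run (initSeg x n), T.run (initSeg y (2 * n))) from
    foldl_initSeg_prodSplit S T (fun _ => rfl) (fun _ => ⟨rfl, rfl⟩) n] at hu
  refine ⟨u, ?_, (TupleScheme.eventually_cell_grouped_append_subset hu (N := N)
    fun l hl hlN => ?_).mono fun _ h => h.trans hVW⟩
  · rw [prod, TupleScheme.cell_grouped_of_run_eq hu]
    exact ⟨hx n, hy (2 * n)⟩
  · obtain ⟨i, k, k', rfl⟩ := List.length_eq_three.1 hl
    have hi := (hN i (hlN i (by simp))).1
    have hk := (hN k (hlN k (by simp))).2
    rw [cell_append_singleton] at hi hk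
    exact prod_mono hi ((T.leaf_next_subset _ _).trans hk)

theorem exists_isPiTree_prod (hX : ∃ F : FoliageTree X, F.IsPiTree) (T : BaireScheme Y)
    (hT : T.GrowsUniformlyAt {n | Even n}) : ∃ F : FoliageTree (X × Y), F.IsPiTree :=
  let ⟨_, hF⟩ := hX
  let ⟨_, hS⟩ := exists_grows_of_isPiTree hF
  ⟨_, isPiTree_toFoliageTree (grows_prod (T := T) hS hT)⟩

end Prod

end BaireScheme

section BaireSpace

lemma foldl_append_singleton (u w : List ℕ) : u.foldl (fun v k => v ++ [k]) w = w ++ u := by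
  induction u generalizing w with
  | nil => simp
  | cons k u ih => simp [ih]

namespace BaireScheme

def baire : BaireScheme (ℕ → ℕ) where
  State := List ℕ
  start := []
  next u k := u ++ [k]
  leaf u := {f | initSeg f u.length = u}
  isOpen_leaf u := isOpen_iff_forall_mem_open.2 fun f hf =>
    ⟨PiNat.cylinder f u.length, fun g hg => (initSeg_congr hg).trans hf,
      PiNat.isOpen_cylinder _ _ _, PiNat.self_mem_cylinder _ _⟩
  leaf_start := by simp
  leaf_eq_iUnion u := by
    ext f
    simp only [mem_iUnion, mem_ofPred_eq, List.length_append, List.length_singleton, initSeg_succ]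
    exact ⟨fun h => ⟨f u.length, by rw [h]⟩, fun ⟨k, hk⟩ => (List.append_inj' hk rfl).1⟩
  disjoint_leaf u j k hjk := disjoint_left.2 fun f hj hk => hjk <| by
    simp only [mem_ofPred_eq, List.length_append, List.length_singleton, initSeg_succ] at hj hk
    simpa using (List.append_inj' hj rfl).2.symm.trans (List.append_inj' hk rfl).2
  iInter_leaf x := ⟨x, by
    ext f
    simp only [foldl_append_singleton, List.nil_append, mem_iInter, mem_ofPred_eq,
      length_initSeg, mem_singleton_iff]
    exact ⟨eq_of_forall_initSeg_eq, fun h _ => h ▸ rfl⟩⟩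

lemma cell_baire (u : List ℕ) : baire.cell u = {f | initSeg f u.length = u} := by
  simp only [cell, run, baire, foldl_append_singleton, List.nil_append]

lemma growsUniformlyAt_baire : baire.GrowsUniformlyAt univ := by
  intro q W hW
  obtain ⟨_, ⟨z, n, rfl⟩, hqz, hzW⟩ := (PiNat.isTopologicalBasis_cylinders _).mem_nhds_iff.1 hW
  rw [← PiNat.mem_cylinder_iff_eq.1 hqz] at hzW
  filter_upwards [eventually_ge_atTop n] with m hm _ u rfl hq
  refine Eventually.of_forall fun k => (baire.cell_append_subset u [k]).trans fun f hf => hzW ?_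
  rw [cell_baire, mem_ofPred_eq] at hf hq
  intro i hi
  simpa [show i < u.length by omega] using congrArg (·[i]?) (hf.trans hq.symm)

end BaireScheme

end BaireSpace

section Sorgenfrey

lemma isOpen_Ico_sorgLine (a b : ℝ) : @IsOpen SorgLine _ (Ico a b : Set ℝ) :=
  TopologicalSpace.isOpen_generateFrom_of_mem ⟨a, b, rfl⟩

lemma exists_Ico_subset_of_mem_nhds_sorgLine {q : ℝ} {W : Set ℝ}
    (hW : W ∈ @nhds SorgLine _ q) : ∃ d, q < d ∧ Ico q d ⊆ W := by
  have hbasis := TopologicalSpace.isTopologicalBasis_of_subbasis_of_inter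
    (t := (inferInstance : TopologicalSpace SorgLine)) rfl fun _ ⟨a, b, hs⟩ _ ⟨c, d, ht⟩ =>
      ⟨max a c, min b d, by rw [hs, ht]; exact Ico_inter_Ico⟩
  obtain ⟨t, ht, hqt, htW⟩ := hbasis.mem_nhds_iff.1 hW
  rcases ht with rfl | ⟨a, b, rfl⟩
  · exact ⟨q + 1, lt_add_one q, (subset_univ _).trans htW⟩
  · exact ⟨b, hqt.2, (Ico_subset_Ico_left hqt.1).trans htW⟩

/-- The points `a = cut a b 0 < cut a b 1 < ⋯ → b` split `[a, b)` into pieces at most half as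
long. -/
noncomputable def cut (a b : ℝ) (k : ℕ) : ℝ := b - (b - a) * 2⁻¹ ^ k

lemma cut_zero (a b : ℝ) : cut a b 0 = a := by simp [cut]

lemma cut_succ_sub (a b : ℝ) (k : ℕ) :
    cut a b (k + 1) - cut a b k = (b - a) * 2⁻¹ ^ (k + 1) := by
  simp only [cut, pow_succ]; ring

lemma cut_strictMono {a b : ℝ} (h : a < b) : StrictMono (cut a b) :=
  strictMono_nat_of_lt_succ fun k => sub_pos.1 <| by
    rw [cut_succ_sub]; exact mul_pos (sub_pos.2 h) (by positivity)

lemma cut_lt {a b : ℝ} (h : a < b) (k : ℕ) : cut a b k < b :=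
  sub_lt_self b (mul_pos (sub_pos.2 h) (by positivity))

lemma tendsto_cut (a b : ℝ) : Tendsto (cut a b) atTop (𝓝 b) := by
  have h := ((tendsto_pow_atTop_nhds_zero_of_lt_one (by norm_num)
    (by norm_num : (2 : ℝ)⁻¹ < 1)).const_mul (b - a)).const_sub b
  rwa [mul_zero, sub_zero] at h

lemma iUnion_Ico_cut {a b : ℝ} (h : a < b) :
    ⋃ k, Ico (cut a b k) (cut a b (k + 1)) = Ico a b := by
  refine subset_antisymm (iUnion_subset fun k => Ico_subset_Ico ?_ (cut_lt h _).le) fun y hy => ?_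
  · simpa only [cut_zero] using (cut_strictMono h).monotone k.zero_le
  · have hex : ∃ k, y < cut a b k := ((tendsto_cut a b).eventually (lt_mem_nhds hy.2)).exists
    obtain ⟨j, hj⟩ : ∃ j, Nat.find hex = j + 1 :=
      Nat.exists_eq_add_one.2 <| Nat.pos_of_ne_zero fun h0 =>
        (Nat.find_spec hex).not_ge (by rw [h0, cut_zero]; exact hy.1)
    exact mem_iUnion.2 ⟨j, not_lt.1 (Nat.find_min hex (by omega)), hj ▸ Nat.find_spec hex⟩

lemma pairwise_disjoint_Ico_cut {a b : ℝ} (h : a < b) :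
    Pairwise fun j k =>
      Disjoint (Ico (cut a b j) (cut a b (j + 1))) (Ico (cut a b k) (cut a b (k + 1))) := by
  simpa only [Order.succ_eq_add_one] using
    (cut_strictMono h).monotone.pairwise_disjoint_on_Ico_succ

lemma iInter_Ico_eq_singleton {A B : ℕ → ℝ} (hA : Monotone A) (hB : StrictAnti B)
    (hAB : ∀ n, A n ≤ B n) (hw : Tendsto (fun n => B n - A n) atTop (𝓝 0)) :
    ⋂ n, Ico (A n) (B n) = {⨆ n, A n} := by
  have hmem := mem_iInter.1 (hA.ciSup_mem_iInter_Icc_of_antitone hB.antitone hAB)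
  refine subset_antisymm (fun y hy => ?_) <| singleton_subset_iff.2 <| mem_iInter.2 fun n =>
    ⟨(hmem n).1, (hmem (n + 1)).2.trans_lt (hB n.lt_succ_self)⟩
  have hy := mem_iInter.1 hy
  have hle : |y - ⨆ n, A n| ≤ 0 := ge_of_tendsto' hw fun n => abs_sub_le_iff.2
    ⟨by linarith [(hy n).2, (hmem n).1], by linarith [(hy n).1, (hmem n).2]⟩
  exact mem_singleton_iff.2 (sub_eq_zero.1 (abs_nonpos_iff.1 hle))

inductive SorgState
  | line
  | ico (a b : ℝ) (hab : a < b)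

namespace SorgState

noncomputable def next : SorgState → ℕ → SorgState
  | line, k => ico (Equiv.intEquivNat.symm k) (Equiv.intEquivNat.symm k + 1) (lt_add_one _)
  | ico a b hab, k => ico (cut a b k) (cut a b (k + 1)) (cut_strictMono hab k.lt_succ_self)

def leaf : SorgState → Set ℝ
  | line => univ
  | ico a b _ => Ico a b

/-- The line gets the junk interval `[-1, 1)`, of width `2`, so that widths at least halve at
every step. -/
def lo : SorgState → ℝ
  | line => -1
  | ico a _ _ => a

def hi : SorgState → ℝ
  | line => 1
  | ico _ b _ => b

lemma leaf_next (s : SorgState) (k : ℕ) :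
    leaf (next s k) = Ico (lo (next s k)) (hi (next s k)) := by
  cases s <;> rfl

lemma lo_next_lt_hi_next (s : SorgState) (k : ℕ) : lo (next s k) < hi (next s k) := by
  cases s with
  | line => exact lt_add_one _
  | ico a b hab => exact cut_strictMono hab k.lt_succ_self

lemma lo_next_next (t : SorgState) (j k : ℕ) :
    lo (next (next t j) k) = cut (lo (next t j)) (hi (next t j)) k := by
  cases t <;> rfl

lemma hi_next_next (t : SorgState) (j k : ℕ) :
    hi (next (next t j) k) = cut (lo (next t j)) (hi (next t j)) (k + 1) := by
  cases t <;> rfl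

lemma lo_next_le_lo_next_next (t : SorgState) (j k : ℕ) :
    lo (next t j) ≤ lo (next (next t j) k) := by
  rw [lo_next_next]
  simpa only [cut_zero] using (cut_strictMono (lo_next_lt_hi_next t j)).monotone k.zero_le

lemma hi_next_next_lt (t : SorgState) (j k : ℕ) : hi (next (next t j) k) < hi (next t j) := by
  rw [hi_next_next]; exact cut_lt (lo_next_lt_hi_next t j) _

lemma leaf_next_subset (s : SorgState) (k : ℕ) : leaf (next s k) ⊆ leaf s := by
  cases s with
  | line => exact subset_univ _
  | ico a b hab => exact (iUnion_Ico_cut hab).subset.trans' (subset_iUnion_of_subset k le_rfl)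

lemma width_next_le (s : SorgState) (k : ℕ) :
    hi (next s k) - lo (next s k) ≤ (hi s - lo s) * 2⁻¹ := by
  cases s with
  | line => simp [next, lo, hi]; norm_num
  | ico a b hab =>
    change cut a b (k + 1) - cut a b k ≤ (b - a) * 2⁻¹
    rw [cut_succ_sub]
    exact mul_le_mul_of_nonneg_left (pow_le_of_le_one (by norm_num) (by norm_num) k.succ_ne_zero)
      (sub_pos.2 hab).le

lemma width_foldl_le (u : List ℕ) :
    hi (u.foldl next line) - lo (u.foldl next line) ≤ 2 * 2⁻¹ ^ u.length := by
  suffices ∀ s, hi (u.foldl next s) - lo (u.foldl next s) ≤ (hi s - lo s) * 2⁻¹ ^ u.length by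
    simpa [lo, hi, one_add_one_eq_two] using this line
  induction u with
  | nil => simp
  | cons k u ih =>
    intro s
    rw [List.foldl_cons, List.length_cons, pow_succ', ← mul_assoc]
    exact (ih _).trans (mul_le_mul_of_nonneg_right (width_next_le s k) (by positivity))

lemma iInter_leaf_foldl_initSeg (x : ℕ → ℕ) :
    ∃ z : ℝ, ⋂ n, leaf ((initSeg x n).foldl next line) = {z} := by
  let t : ℕ → SorgState := fun n => (initSeg x n).foldl next line
  have ht (n : ℕ) : t (n + 1) = (t n).next (x n) := by
    simp only [t, initSeg_succ, List.foldl_append, List.foldl_cons, List.foldl_nil]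
  let A : ℕ → ℝ := fun n => (t (n + 1)).lo
  let B : ℕ → ℝ := fun n => (t (n + 1)).hi
  have hAB (n : ℕ) : A n ≤ B n := by
    simp only [A, B, ht]; exact (lo_next_lt_hi_next _ _).le
  have hA : Monotone A := monotone_nat_of_le_succ fun n => by
    simp only [A, ht (n + 1)]; rw [ht]; exact lo_next_le_lo_next_next _ _ _
  have hB : StrictAnti B := strictAnti_nat_of_succ_lt fun n => by
    simp only [B, ht (n + 1)]; rw [ht]; exact hi_next_next_lt _ _ _
  have hw : Tendsto (fun n => B n - A n) atTop (𝓝 0) := by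
    refine squeeze_zero (fun n => sub_nonneg.2 (hAB n)) (fun n => ?_)
      ((((tendsto_pow_atTop_nhds_zero_of_lt_one (by norm_num) (by norm_num : (2 : ℝ)⁻¹ < 1)).comp
        (tendsto_add_atTop_nat 1)).const_mul 2).trans_eq (by rw [mul_zero]))
    simpa using width_foldl_le (initSeg x (n + 1))
  refine ⟨_, Eq.trans ?_ (iInter_Ico_eq_singleton hA hB hAB hw)⟩
  rw [← (antitone_foldl_initSeg leaf_next_subset _ x).iInter_comp_tendsto_atTop
    (tendsto_add_atTop_nat 1)]
  exact iInter_congr fun n => by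
    change leaf (t (n + 1)) = Ico (t (n + 1)).lo (t (n + 1)).hi
    rw [ht, leaf_next]

lemma eventually_leaf_next_next_subset {t : SorgState} {j : ℕ} {q d : ℝ}
    (hq : q ∈ leaf (next t j)) (hw : hi (next t j) - lo (next t j) < d - q) :
    ∀ᶠ k in atTop, leaf (next (next t j) k) ⊆ Ico q d := by
  rw [leaf_next] at hq
  filter_upwards [(tendsto_cut _ _).eventually (lt_mem_nhds hq.2)] with k hk
  rw [leaf_next, lo_next_next, hi_next_next]
  exact Ico_subset_Ico hk.le ((cut_lt (lo_next_lt_hi_next t j) _).le.trans (by linarith [hq.1]))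

end SorgState

namespace BaireScheme

noncomputable def sorgenfrey : BaireScheme SorgLine where
  State := SorgState
  start := .line
  next := SorgState.next
  leaf := SorgState.leaf
  isOpen_leaf
    | .line => isOpen_univ
    | .ico a b _ => isOpen_Ico_sorgLine a b
  leaf_start := rfl
  leaf_eq_iUnion
    | .line => ((Equiv.intEquivNat.symm.surjective.iUnion_comp
        fun n : ℤ => Ico (n : ℝ) (n + 1)).trans (iUnion_Ico_intCast ℝ)).symm
    | .ico _ _ hab => (iUnion_Ico_cut hab).symm
  disjoint_leaf
    | .line, _, _, hjk => pairwise_disjoint_Ico_intCast ℝ (Equiv.intEquivNat.symm.injective.ne hjk)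
    | .ico _ _ hab, _, _, hjk => pairwise_disjoint_Ico_cut hab hjk
  iInter_leaf := SorgState.iInter_leaf_foldl_initSeg

lemma growsUniformlyAt_sorgenfrey : sorgenfrey.GrowsUniformlyAt univ := by
  intro (q : ℝ) W hW
  obtain ⟨d, hqd, hdW⟩ := exists_Ico_subset_of_mem_nhds_sorgLine hW
  have hsmall : ∀ᶠ n in atTop, 2 * 2⁻¹ ^ n < d - q :=
    ((tendsto_pow_atTop_nhds_zero_of_lt_one (by norm_num) (by norm_num : (2 : ℝ)⁻¹ < 1)).const_mul
      2).eventually (gt_mem_nhds (by rw [mul_zero]; exact sub_pos.2 hqd))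
  filter_upwards [hsmall, eventually_ge_atTop 1] with n hn hn1 _ u hu hq
  obtain ⟨u, j, rfl⟩ := u.eq_nil_or_concat'.resolve_left (by rintro rfl; simp at hu; omega)
  have hw := SorgState.width_foldl_le (u ++ [j])
  rw [hu, List.foldl_append, List.foldl_cons, List.foldl_nil] at hw
  rw [cell_append_singleton] at hq
  filter_upwards [SorgState.eventually_leaf_next_next_subset hq (hw.trans_lt hn)] with k hk
  rw [cell_append_singleton, run_append, List.foldl_cons, List.foldl_nil]
  exact hk.trans hdW

end BaireScheme

end Sorgenfrey

section Pi

def extendCoords (βs : List (List ℕ)) (l : List ℕ) : List (List ℕ) :=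
  List.ofFn fun i : Fin (βs.length + 2) => βs.getD i [] ++ [l.getD i 0]

@[simp] lemma length_extendCoords (βs : List (List ℕ)) (l : List ℕ) :
    (extendCoords βs l).length = βs.length + 2 := by
  simp [extendCoords]

lemma getD_extendCoords_of_lt (βs : List (List ℕ)) (l : List ℕ) {i : ℕ}
    (hi : i < βs.length + 2) : (extendCoords βs l).getD i [] = βs.getD i [] ++ [l.getD i 0] := by
  rw [List.getD_eq_getElem _ _ (by simpa using hi)]
  exact List.getElem_ofFn _

lemma getD_extendCoords_of_le (βs : List (List ℕ)) (l : List ℕ) {i : ℕ}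
    (hi : βs.length + 2 ≤ i) : (extendCoords βs l).getD i [] = [] :=
  List.getD_eq_default _ _ (by simpa using hi)

/-- Coordinate `i` joins at step `i / 2` and is then refined by entry `i` of each tuple. -/
def coordSeq (ls : ℕ → List ℕ) (i : ℕ) : ℕ → ℕ := fun j => (ls (i / 2 + j)).getD i 0

lemma length_foldl_extendCoords (ls : ℕ → List ℕ) (m : ℕ) :
    ((initSeg ls m).foldl extendCoords []).length = 2 * m := by
  induction m with
  | zero => rfl
  | succ m ih =>
    rw [initSeg_succ, List.foldl_append, List.foldl_cons, List.foldl_nil, length_extendCoords, ih]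
    ring

lemma getD_foldl_extendCoords (ls : ℕ → List ℕ) (m i : ℕ) :
    ((initSeg ls m).foldl extendCoords []).getD i [] = initSeg (coordSeq ls i) (m - i / 2) := by
  induction m with
  | zero => simp
  | succ m ih =>
    rw [initSeg_succ, List.foldl_append, List.foldl_cons, List.foldl_nil]
    rcases lt_or_ge i (2 * m + 2) with hi | hi
    · rw [getD_extendCoords_of_lt _ _ (by rw [length_foldl_extendCoords]; exact hi), ih,
        show m + 1 - i / 2 = m - i / 2 + 1 by omega, initSeg_succ]
      simp only [coordSeq, show i / 2 + (m - i / 2) = m by omega]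
    · rw [getD_extendCoords_of_le _ _ (by rw [length_foldl_extendCoords]; exact hi),
        show m + 1 - i / 2 = 0 by omega, initSeg_zero]

namespace BaireScheme

variable {Y : Type v} [TopologicalSpace Y] (S : BaireScheme Y)

def coordLeaf (βs : List (List ℕ)) : Set (ℕ → Y) := {y | ∀ i, y i ∈ S.cell (βs.getD i [])}

lemma isOpen_coordLeaf (βs : List (List ℕ)) : IsOpen (S.coordLeaf βs) := by
  have h : S.coordLeaf βs = (Iio βs.length).pi fun i => S.cell (βs.getD i []) := by
    refine ext fun y => ⟨fun hy i _ => hy i, fun hy i => ?_⟩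
    by_cases hi : i < βs.length
    · exact hy i hi
    · rw [List.getD_eq_default _ _ (not_lt.1 hi), cell_nil]; exact mem_univ _
  rw [h]
  exact isOpen_set_pi (finite_Iio _) fun i _ => S.isOpen_cell _

lemma coordLeaf_extendCoords_subset (βs : List (List ℕ)) (l : List ℕ) :
    S.coordLeaf (extendCoords βs l) ⊆ S.coordLeaf βs := fun y hy i => by
  rcases lt_or_ge i (βs.length + 2) with hi | hi
  · exact S.cell_append_subset _ _ (getD_extendCoords_of_lt βs l hi ▸ hy i)
  · rw [List.getD_eq_default _ _ (by omega), cell_nil]; exact mem_univ _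

lemma coordLeaf_eq_iUnion (βs : List (List ℕ)) :
    S.coordLeaf βs = ⋃ (l : List ℕ) (_ : l.length = βs.length + 2),
      S.coordLeaf (extendCoords βs l) := by
  refine subset_antisymm (fun y hy => ?_)
    (iUnion₂_subset fun l _ => S.coordLeaf_extendCoords_subset βs l)
  choose k hk using fun i => mem_iUnion.1 (S.cell_eq_iUnion _ ▸ hy i)
  refine mem_iUnion₂.2 ⟨List.ofFn fun i : Fin (βs.length + 2) => k i, by simp, fun i => ?_⟩
  rcases lt_or_ge i (βs.length + 2) with hi | hi
  · have hki : (List.ofFn fun i : Fin (βs.length + 2) => k i).getD i 0 = k i := by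
      rw [List.getD_eq_getElem _ _ (by rw [List.length_ofFn]; exact hi), List.getElem_ofFn]
    rw [getD_extendCoords_of_lt _ _ hi, hki]
    exact hk i
  · rw [getD_extendCoords_of_le _ _ hi, cell_nil]; exact mem_univ _

lemma disjoint_coordLeaf {βs : List (List ℕ)} {l l' : List ℕ} (hl : l.length = βs.length + 2)
    (hl' : l'.length = βs.length + 2) (hne : l ≠ l') :
    Disjoint (S.coordLeaf (extendCoords βs l)) (S.coordLeaf (extendCoords βs l')) := by
  obtain ⟨i, hi, hi', hli⟩ : ∃ (i : ℕ) (hi : i < l.length) (hi' : i < l'.length),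
      l[i] ≠ l'[i] := by
    by_contra! h
    exact hne (List.ext_getElem (hl.trans hl'.symm) h)
  have hdisj : Disjoint (S.cell (βs.getD i [] ++ [l.getD i 0]))
      (S.cell (βs.getD i [] ++ [l'.getD i 0])) := by
    refine S.disjoint_cell _ ?_
    rwa [List.getD_eq_getElem _ _ hi, List.getD_eq_getElem _ _ hi']
  rw [Set.disjoint_left]
  intro y hy hy'
  have h := hy i
  have h' := hy' i
  rw [getD_extendCoords_of_lt βs l (hl ▸ hi)] at h
  rw [getD_extendCoords_of_lt βs l' (hl ▸ hi)] at h'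
  exact hdisj.ne_of_mem h h' rfl

lemma iInter_coordLeaf (ls : ℕ → List ℕ) :
    ∃ z, ⋂ m, S.coordLeaf ((initSeg ls m).foldl extendCoords []) = {z} := by
  choose z hz using fun i => S.iInter_cell (coordSeq ls i)
  refine ⟨z, ext fun y => ?_⟩
  have hcoord (i : ℕ) :
      (∀ m, y i ∈ S.cell (initSeg (coordSeq ls i) (m - i / 2))) ↔ y i = z i := by
    rw [← mem_singleton_iff, ← hz i, ← (S.antitone_cell_initSeg _).iInter_comp_tendsto_atTop
      (tendsto_sub_atTop_nat (i / 2)), mem_iInter]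
  simp only [coordLeaf, getD_foldl_extendCoords, mem_iInter, mem_ofPred_eq, mem_singleton_iff]
  exact ⟨fun h => funext fun i => (hcoord i).1 fun m => h m i,
    fun h m i => (hcoord i).2 (congrFun h i) m⟩

def piTuple : TupleScheme (ℕ → Y) where
  State := List (List ℕ)
  start := []
  dim βs := βs.length
  split := extendCoords
  leaf := S.coordLeaf
  isOpen_leaf := S.isOpen_coordLeaf
  leaf_start := eq_univ_of_forall fun y i => by simp
  leaf_eq_iUnion := S.coordLeaf_eq_iUnion
  disjoint_leaf _ _ _ := S.disjoint_coordLeaf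
  iInter_leaf := S.iInter_coordLeaf

noncomputable def pi : BaireScheme (ℕ → Y) := S.piTuple.grouped

variable {S}

theorem growsUniformlyAt_even_pi (hS : S.GrowsUniformlyAt univ) :
    S.pi.GrowsUniformlyAt {n | Even n} := by
  intro q W hW
  rw [nhds_pi, Filter.mem_pi] at hW
  obtain ⟨I, hI, t, ht, hIW⟩ := hW
  -- at depth `n` of the power, coordinate `i` sits at depth `n / 2 - i / 2` of `S`
  have hdeep : ∀ᶠ n in atTop, ∀ i ∈ I, i ≤ n ∧ ∀ u : List ℕ, u.length = n / 2 - i / 2 →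
      q i ∈ S.cell u → ∀ᶠ k in atTop, S.cell (u ++ [k]) ⊆ t i := by
    refine hI.eventually_all.2 fun i _ => (eventually_ge_atTop i).and ?_
    exact ((tendsto_sub_atTop_nat (i / 2)).comp
      (Nat.tendsto_div_const_atTop two_ne_zero)).eventually
        ((hS (q i) (t i) (ht i)).mono fun _ hm => hm (mem_univ _))
  filter_upwards [hdeep] with n hn ⟨m, hm⟩ u hu hq
  obtain ⟨ls, hls⟩ := S.piTuple.exists_run_grouped_eq_whole_of_length (u := u) (m := m) (by omega)
  have hq' : q ∈ S.coordLeaf ((initSeg ls m).foldl extendCoords []) := by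
    rw [pi, TupleScheme.cell_grouped_of_run_eq hls] at hq; exact hq
  have hcoord : ∀ i ∈ I, ∀ᶠ k in atTop,
      S.cell (((initSeg ls m).foldl extendCoords []).getD i [] ++ [k]) ⊆ t i := fun i hi =>
    (hn i hi).2 _ (by rw [getD_foldl_extendCoords, length_initSeg]; omega) (hq' i)
  obtain ⟨N, hN⟩ := eventually_atTop.1 (hI.eventually_all.2 hcoord)
  refine TupleScheme.eventually_cell_grouped_append_subset hls (N := N)
    fun l hl hlN y hy => hIW fun i hi => ?_
  change l.length = ((initSeg ls m).foldl extendCoords []).length + 2 at hl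
  change y ∈ S.coordLeaf (extendCoords ((initSeg ls m).foldl extendCoords []) l) at hy
  have hil : i < l.length := by
    rw [hl, length_foldl_extendCoords]; have := (hn i hi).1; omega
  have hyi := hy i
  rw [getD_extendCoords_of_lt _ _ (hl ▸ hil)] at hyi
  exact hN _ (hlN _ (List.getD_eq_getElem _ _ hil ▸ List.getElem_mem hil)) i hi hyi

end BaireScheme

end Pi

/-- Corollary `cor.pi.tree.for.X*N.X*Sor.l` of the paper. -/
theorem products_with_baire_and_sorgenfrey_have_piTree
    {X : Type u} [TopologicalSpace X] (hX : ∃ F : FoliageTree X, F.IsPiTree) :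
    (∃ F : FoliageTree (X × (ℕ → ℕ)), F.IsPiTree) ∧
      (∃ F : FoliageTree (X × SorgLine), F.IsPiTree) ∧
      ∃ F : FoliageTree (X × (ℕ → SorgLine)), F.IsPiTree := by
  open BaireScheme in
  exact ⟨exists_isPiTree_prod hX baire (growsUniformlyAt_baire.mono (subset_univ _)),
    exists_isPiTree_prod hX sorgenfrey (growsUniformlyAt_sorgenfrey.mono (subset_univ _)),
    exists_isPiTree_prod hX sorgenfrey.pi (growsUniformlyAt_even_pi growsUniformlyAt_sorgenfrey)⟩
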